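/- arXiv:2401.00253 — 11 statements merged into one kernel-verified Lean document; each statement's English description precedes it below -/
import Mathlib

section
/- Let V be an n-dimensional vector space over F_q, and let a, b, j be positive integers with j ≤ min{a,b} and a + b − j ≤ n. For any a-dimensional subspace A of V, the number of b-dimensional subspaces B of V with dim(B ∩ A) = j equals q^((a−j)(b−j)) · [a choose j]_q · [n−a choose b−j]_q. -/
/-- The Gaussian binomial coefficient, defined via the q-Pascal recurrence. -/
def gaussBinom (q : ℕ) : ℕ → ℕ → ℕ
  | _, 0 => 1
  | 0, _ + 1 => 0
  | m + 1, i + 1 => gaussBinom q m i + q ^ (i + 1) * gaussBinom q m (i + 1)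

/-!
For `j ≤ b`, the map `B ↦ (B ⊓ A, B ⊔ A)` sends the subspaces counted onto the pairs `J ≤ A ≤ U`
with `dim J = j`, `dim U = a + b - j`. Its fibre over `(J, U)` consists of the complements of
`A / J` in `U / J`, a torsor under `Hom(U / A, A / J)`, hence has `q ^ ((a - j) * (b - j))`
elements. The pairs are counted by the Grassmannians of `A` and `V / A`, and these are Gaussian
binomials: applied with `A` a line, the same fibration gives the `q`-Pascal recurrence.
-/

open Module Submodule

theorem Nat.card_eq_card_mul_of_card_fiber_eq {α β : Type*} [Finite α] [Finite β] (f : α → β)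
    {c : ℕ} (h : ∀ y, Nat.card {x // f x = y} = c) : Nat.card α = Nat.card β * c := by
  have := Fintype.ofFinite β
  rw [← Nat.card_congr (Equiv.sigmaFiberEquiv f), Nat.card_sigma]
  simp [h]

theorem Nat.card_subtype_eq_card_and_add_card_and_not {α : Type*} [Finite α] (P Q : α → Prop) :
    Nat.card {x // P x} = Nat.card {x // P x ∧ Q x} + Nat.card {x // P x ∧ ¬Q x} := by
  classical
  rw [← Nat.card_congr (Equiv.subtypeSubtypeEquivSubtypeInter P Q),
    ← Nat.card_congr (Equiv.subtypeSubtypeEquivSubtypeInter P (¬Q ·)), ← Nat.card_sum]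
  exact Nat.card_congr (Equiv.sumCompl _).symm

section Lattice

variable {α β : Type*} [Lattice α] [Lattice β]

def OrderIso.subtypeInfSupEquiv (e : α ≃o β) (a c d : α) :
    {x // x ⊓ a = c ∧ x ⊔ a = d} ≃ {y // y ⊓ e a = e c ∧ y ⊔ e a = e d} :=
  e.toEquiv.subtypeEquiv fun x => by
    simp only [OrderIso.coe_toEquiv, ← e.map_inf, ← e.map_sup, e.injective.eq_iff]

def Set.Iic.subtypeInfSupEquiv {u : α} (a c d : Set.Iic u) :
    {x : Set.Iic u // x ⊓ a = c ∧ x ⊔ a = d} ≃ {x : α // x ⊓ a = c ∧ x ⊔ a = d} :=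
  (Equiv.subtypeEquivRight fun x => by
      simp only [Subtype.ext_iff, Set.Iic.coe_inf, Set.Iic.coe_sup]).trans
    (Equiv.subtypeSubtypeEquivSubtype fun h => (h.2 ▸ le_sup_left).trans d.2)

def Set.Ici.subtypeInfSupEquiv {l : α} (a c d : Set.Ici l) :
    {x : Set.Ici l // x ⊓ a = c ∧ x ⊔ a = d} ≃ {x : α // x ⊓ a = c ∧ x ⊔ a = d} :=
  (Equiv.subtypeEquivRight fun x => by
      simp only [Subtype.ext_iff, Set.Ici.coe_inf, Set.Ici.coe_sup]).trans
    (Equiv.subtypeSubtypeEquivSubtype fun h => c.2.trans (h.1 ▸ inf_le_left))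

end Lattice

section Subspaces

variable {K V : Type*} [Field K] [AddCommGroup V] [Module K V]

noncomputable def Submodule.projectionsEquivLinearMap {p q : Submodule K V} (h : IsCompl p q) :
    {f : V →ₗ[K] p // ∀ x : p, f x = x} ≃ (q →ₗ[K] p) where
  toFun f := f.1 ∘ₗ q.subtype
  invFun g := ⟨LinearMap.ofIsCompl h LinearMap.id g, LinearMap.ofIsCompl_apply_left h⟩
  left_inv f := Subtype.ext <| LinearMap.ofIsCompl_eq h (fun x => (f.2 x).symm) fun _ => rfl
  right_inv _ := LinearMap.ext <| LinearMap.ofIsCompl_apply_right h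

theorem Submodule.natCard_isCompl [Finite K] [FiniteDimensional K V] (p : Submodule K V) :
    Nat.card {q : Submodule K V // IsCompl p q}
      = Nat.card K ^ (finrank K p * finrank K (V ⧸ p)) := by
  obtain ⟨q, hpq⟩ := p.exists_isCompl
  rw [Nat.card_congr (p.isComplEquivProj.trans (projectionsEquivLinearMap hpq)),
    natCard_eq_pow_finrank (K := K), finrank_linearMap,
    (quotientEquivOfIsCompl p q hpq).finrank_eq, mul_comm]

theorem Submodule.natCard_le_and_finrank_eq (A : Submodule K V) (k : ℕ) :
    Nat.card {J : Submodule K V // J ≤ A ∧ finrank K J = k}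
      = Nat.card {J : Submodule K A // finrank K J = k} :=
  Nat.card_congr <| (Equiv.subtypeSubtypeEquivSubtypeInter (· ∈ Set.Iic A) _).symm.trans
    (A.mapIic.toEquiv.subtypeEquiv fun J => by
      rw [OrderIso.coe_toEquiv, coe_mapIic_apply, finrank_map_subtype_eq]).symm

variable [FiniteDimensional K V]

theorem Submodule.finrank_map_mkQ_add_finrank_inf (p W : Submodule K V) :
    finrank K (W.map p.mkQ) + finrank K ↥(W ⊓ p) = finrank K W := by
  have h := LinearMap.finrank_range_add_finrank_ker (p.mkQ ∘ₗ W.subtype)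
  rwa [LinearMap.range_comp, range_subtype, LinearMap.ker_comp, ker_mkQ,
    ← W.finrank_map_subtype_eq, map_comap_subtype] at h

theorem Submodule.finrank_map_mkQ_of_le {p W : Submodule K V} (h : p ≤ W) :
    finrank K (W.map p.mkQ) = finrank K W - finrank K p := by
  have := finrank_map_mkQ_add_finrank_inf p W
  rw [inf_eq_right.2 h] at this
  omega

theorem Submodule.finrank_comap_mkQ (p : Submodule K V) (W : Submodule K (V ⧸ p)) :
    finrank K (W.comap p.mkQ) = finrank K W + finrank K p := by
  have h := finrank_map_mkQ_of_le (le_comap_mkQ p W)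
  rw [map_comap_eq_self (by simp)] at h
  have := finrank_mono (le_comap_mkQ p W)
  omega

theorem Submodule.natCard_ge_and_finrank_eq_add (A : Submodule K V) (k : ℕ) :
    Nat.card {U : Submodule K V // A ≤ U ∧ finrank K U = finrank K A + k}
      = Nat.card {W : Submodule K (V ⧸ A) // finrank K W = k} :=
  Nat.card_congr <| (Equiv.subtypeSubtypeEquivSubtypeInter (· ∈ Set.Ici A) _).symm.trans
    (A.comapMkQRelIso.toEquiv.subtypeEquiv fun W => by
      change _ ↔ finrank K (W.comap A.mkQ) = _
      rw [finrank_comap_mkQ, add_comm, Nat.add_left_cancel_iff]).symm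

theorem Submodule.natCard_finrank_eq_zero :
    Nat.card {W : Submodule K V // finrank K W = 0} = 1 :=
  Nat.card_eq_one_iff_exists.2
    ⟨⟨⊥, finrank_bot K V⟩, fun W => Subtype.ext (Submodule.finrank_eq_zero.1 W.2)⟩

theorem Submodule.natCard_finrank_eq_finrank :
    Nat.card {W : Submodule K V // finrank K W = finrank K V} = 1 :=
  Nat.card_eq_one_iff_exists.2
    ⟨⟨⊤, finrank_top K V⟩, fun W => Subtype.ext (eq_top_of_finrank_eq W.2)⟩

variable [Finite K]

theorem Submodule.natCard_inf_eq_bot_sup_eq {A U : Submodule K V} (hAU : A ≤ U) :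
    Nat.card {B : Submodule K V // B ⊓ A = ⊥ ∧ B ⊔ A = U}
      = Nat.card K ^ (finrank K A * (finrank K U - finrank K A)) := by
  set e := U.mapIic
  set A' := A.comap U.subtype
  have heA : e.symm ⟨A, hAU⟩ = A' := rfl
  have hcompl : ∀ C, (C ⊓ A' = ⊥ ∧ C ⊔ A' = ⊤) ↔ IsCompl A' C := fun C => by
    rw [isCompl_iff, disjoint_iff, codisjoint_iff, inf_comm, sup_comm]
  have hA' : finrank K A' = finrank K A := (comapSubtypeEquivOfLe hAU).finrank_eq
  refine (Nat.card_congr (Set.Iic.subtypeInfSupEquiv ⟨A, hAU⟩ ⊥ ⊤)).symm.trans ?_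
  rw [Nat.card_congr (e.symm.subtypeInfSupEquiv _ _ _), heA, e.symm.map_bot, e.symm.map_top,
    Nat.card_congr (Equiv.subtypeEquivRight hcompl), natCard_isCompl, finrank_quotient, hA']

theorem Submodule.natCard_inf_eq_sup_eq {J A U : Submodule K V} (hJA : J ≤ A) (hAU : A ≤ U) :
    Nat.card {B : Submodule K V // B ⊓ A = J ∧ B ⊔ A = U}
      = Nat.card K ^ ((finrank K A - finrank K J) * (finrank K U - finrank K A)) := by
  set e := comapMkQRelIso J
  have heA : e.symm ⟨A, hJA⟩ = A.map J.mkQ := rfl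
  have heU : e.symm ⟨U, hJA.trans hAU⟩ = U.map J.mkQ := rfl
  refine (Nat.card_congr
    (Set.Ici.subtypeInfSupEquiv ⟨A, hJA⟩ ⊥ ⟨U, hJA.trans hAU⟩)).symm.trans ?_
  rw [Nat.card_congr (e.symm.subtypeInfSupEquiv _ _ _), heA, heU, e.symm.map_bot,
    natCard_inf_eq_bot_sup_eq (map_mono hAU), finrank_map_mkQ_of_le hJA,
    finrank_map_mkQ_of_le (hJA.trans hAU)]
  have := finrank_mono hJA
  have := finrank_mono hAU
  congr 2
  omega

theorem Submodule.natCard_finrank_eq_finrank_inf_eq (A : Submodule K V) {b j : ℕ} (hjb : j ≤ b) :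
    Nat.card {B : Submodule K V // finrank K B = b ∧ finrank K ↥(B ⊓ A) = j}
      = Nat.card {J : Submodule K A // finrank K J = j}
        * Nat.card {W : Submodule K (V ⧸ A) // finrank K W = b - j}
        * Nat.card K ^ ((finrank K A - j) * (b - j)) := by
  have : Finite V := Module.finite_of_finite K
  let f : {B : Submodule K V // finrank K B = b ∧ finrank K ↥(B ⊓ A) = j} →
      {J // J ≤ A ∧ finrank K J = j} × {U // A ≤ U ∧ finrank K U = finrank K A + (b - j)} :=
    fun B => (⟨B.1 ⊓ A, inf_le_right, B.2.2⟩, ⟨B.1 ⊔ A, le_sup_right, by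
      have := finrank_sup_add_finrank_inf_eq B.1 A
      omega⟩)
  rw [Nat.card_eq_card_mul_of_card_fiber_eq f, Nat.card_prod, natCard_le_and_finrank_eq,
    natCard_ge_and_finrank_eq_add]
  rintro ⟨⟨J, hJA, hJ⟩, ⟨U, hAU, hU⟩⟩
  have hexp : (finrank K A - j) * (b - j)
      = (finrank K A - finrank K J) * (finrank K U - finrank K A) := by
    rw [hJ, hU, Nat.add_sub_cancel_left]
  rw [hexp, ← natCard_inf_eq_sup_eq hJA hAU]
  refine Nat.card_congr
    { toFun := fun B => ⟨B.1.1, congrArg (·.1.1) B.2, congrArg (·.2.1) B.2⟩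
      invFun := fun B => ⟨⟨B.1, ?_, by rw [B.2.1, hJ]⟩,
        Prod.ext (Subtype.ext B.2.1) (Subtype.ext B.2.2)⟩
      left_inv := fun _ => rfl
      right_inv := fun _ => rfl }
  have := finrank_sup_add_finrank_inf_eq B.1 A
  rw [B.2.1, B.2.2] at this
  omega

theorem Submodule.natCard_finrank_eq_gaussBinom (k : ℕ) :
    Nat.card {W : Submodule K V // finrank K W = k}
      = gaussBinom (Nat.card K) (finrank K V) k := by
  obtain ⟨m, hm⟩ : ∃ m, finrank K V = m := ⟨_, rfl⟩
  induction m generalizing V k with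
  | zero =>
    rcases k with _ | k
    · rw [hm, natCard_finrank_eq_zero]; rfl
    · rw [hm]
      exact Nat.card_eq_zero.2 <| Or.inl ⟨fun W => by have := W.1.finrank_le; omega⟩
  | succ m ih =>
    rcases k with _ | k
    · rw [hm, natCard_finrank_eq_zero]; rfl
    have : Nontrivial V := Module.nontrivial_of_finrank_pos (R := K) (by omega)
    obtain ⟨v, hv⟩ := exists_ne (0 : V)
    set L := K ∙ v
    have hL : finrank K L = 1 := finrank_span_singleton hv
    have hVL : finrank K (V ⧸ L) = m := by rw [finrank_quotient, hm, hL]; rfl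
    have hline : Nat.card {J : Submodule K L // finrank K J = 1} = 1 :=
      hL ▸ natCard_finrank_eq_finrank (K := K) (V := L)
    have hdisj (W : Submodule K V) : ¬finrank K ↥(W ⊓ L) = 1 ↔ finrank K ↥(W ⊓ L) = 0 := by
      have := hL ▸ finrank_mono (inf_le_right : W ⊓ L ≤ L)
      omega
    have : Finite V := Module.finite_of_finite K
    rw [Nat.card_subtype_eq_card_and_add_card_and_not _ (fun W => finrank K ↥(W ⊓ L) = 1),
      Nat.card_congr (Equiv.subtypeEquivRight fun W => and_congr_right fun _ => hdisj W),
      natCard_finrank_eq_finrank_inf_eq L (by omega),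
      natCard_finrank_eq_finrank_inf_eq L (by omega), hline, natCard_finrank_eq_zero,
      Nat.add_sub_cancel, Nat.sub_zero, ih k hVL, ih (k + 1) hVL, hVL, hL, hm, gaussBinom]
    ring

end Subspaces

theorem stmt2_general (q n a b j : ℕ)
    (K : Type*) [Field K] [Fintype K] (hK : Fintype.card K = q)
    (V : Type*) [AddCommGroup V] [Module K V] [FiniteDimensional K V]
    (hn : Module.finrank K V = n)
    (hjb : j ≤ b)
    (A : Submodule K V) (hA : Module.finrank K A = a) :
    Nat.card {B : Submodule K V //
        Module.finrank K B = b ∧ Module.finrank K ↥(B ⊓ A) = j}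
      = q ^ ((a - j) * (b - j)) * gaussBinom q a j * gaussBinom q (n - a) (b - j) := by
  rw [A.natCard_finrank_eq_finrank_inf_eq hjb, natCard_finrank_eq_gaussBinom,
    natCard_finrank_eq_gaussBinom, finrank_quotient, ← Fintype.card_eq_nat_card, hK, hn, hA]
  ring

theorem stmt2 (q n a b j : ℕ)
    (K : Type*) [Field K] [Fintype K] (hK : Fintype.card K = q)
    (V : Type*) [AddCommGroup V] [Module K V] [FiniteDimensional K V]
    (hn : Module.finrank K V = n)
    (ha : 0 < a) (hb : 0 < b) (hj : 0 < j)
    (hja : j ≤ a) (hjb : j ≤ b) (habj : a + b - j ≤ n)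
    (A : Submodule K V) (hA : Module.finrank K A = a) :
    Nat.card {B : Submodule K V //
        Module.finrank K B = b ∧ Module.finrank K ↥(B ⊓ A) = j}
      = q ^ ((a - j) * (b - j)) * gaussBinom q a j * gaussBinom q (n - a) (b - j) :=
  stmt2_general q n a b j K hK V hn hjb A hA
end

section
/- Let G be a non-complete bipartite graph with parts X and Y. Define ε(X) = min{|N(A)| − |A| : ∅ ≠ A ⊆ X, N(A) ≠ Y} and ε(Y) = min{|N(B)| − |B| : ∅ ≠ B ⊆ Y, N(B) ≠ X}. Then |Y| − ε(X) = |X| − ε(Y). -/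
/-!
For `A ⊆ X` with `N(A) ≠ Y`, the set `B = Y \ N(A)` is nonempty and `N(B) ⊆ X \ A`, since no
vertex of `A` sees `B`; in particular `N(B) ≠ X`. Hence
`|N(B)| - |B| ≤ (|X| - |A|) - (|Y| - |N(A)|)`, i.e. `ε(Y) ≤ ε(X) + |X| - |Y|`. The symmetric
argument gives the reverse inequality.
-/

/-- Neighborhood (in `Y`) of a set `A ⊆ X` in the bipartite graph given by the
adjacency relation `E : X → Y → Prop`. -/
def nbrX {X Y : Type*} (E : X → Y → Prop) (A : Set X) : Set Y :=
  {y | ∃ a ∈ A, E a y}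

def nbrY {X Y : Type*} (E : X → Y → Prop) (B : Set Y) : Set X :=
  {x | ∃ b ∈ B, E x b}

/-- `ε(X) = sInf (surplusSet E)` and `ε(Y) = sInf (surplusSet (flip E))`. -/
def surplusSet {X Y : Type*} (E : X → Y → Prop) : Set ℤ :=
  {d | ∃ A : Set X, A.Nonempty ∧ nbrX E A ≠ Set.univ ∧ d = ((nbrX E A).ncard : ℤ) - A.ncard}

section Surplus

variable {X Y : Type*} (E : X → Y → Prop)

theorem nbrX_flip (B : Set Y) : nbrX (flip E) B = nbrY E B := rfl

theorem bddBelow_surplusSet [Finite X] : BddBelow (surplusSet E) := by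
  refine ⟨-(Nat.card X : ℤ), ?_⟩
  rintro d ⟨A, -, -, rfl⟩
  have hA : A.ncard ≤ Nat.card X := Set.ncard_le_card A
  omega

theorem surplusSet_nonempty {x : X} {y : Y} (hxy : ¬ E x y) : (surplusSet E).Nonempty := by
  refine ⟨_, {x}, Set.singleton_nonempty x, fun h => ?_, rfl⟩
  obtain ⟨a, rfl, hay⟩ : y ∈ nbrX E {x} := h ▸ Set.mem_univ y
  exact hxy hay

theorem nbrY_compl_nbrX_subset (A : Set X) : nbrY E (nbrX E A)ᶜ ⊆ Aᶜ := by
  rintro x ⟨b, hb, hxb⟩ hxA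
  exact hb ⟨x, hxA, hxb⟩

theorem exists_mem_surplusSet_flip_le [Finite X] [Finite Y] {d : ℤ} (hd : d ∈ surplusSet E) :
    ∃ e ∈ surplusSet (flip E), e ≤ d + Nat.card X - Nat.card Y := by
  obtain ⟨A, ⟨a, ha⟩, hNA, rfl⟩ := hd
  have hsub := nbrY_compl_nbrX_subset E A
  refine ⟨_, ⟨(nbrX E A)ᶜ, Set.nonempty_compl.mpr hNA, fun h => ?_, rfl⟩, ?_⟩
  · exact hsub ((nbrX_flip E _ ▸ h) ▸ Set.mem_univ a) ha
  · have hB := Set.ncard_add_ncard_compl (nbrX E A)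
    have hAc := Set.ncard_add_ncard_compl A
    have hle := Set.ncard_le_ncard hsub
    rw [nbrX_flip]
    omega

theorem csInf_surplusSet_flip_le [Finite X] [Finite Y] (hne : (surplusSet E).Nonempty) :
    sInf (surplusSet (flip E)) ≤ sInf (surplusSet E) + Nat.card X - Nat.card Y := by
  suffices sInf (surplusSet (flip E)) - Nat.card X + Nat.card Y ≤ sInf (surplusSet E) by omega
  refine le_csInf hne fun d hd => ?_
  obtain ⟨e, he, hed⟩ := exists_mem_surplusSet_flip_le E hd
  have := csInf_le (bddBelow_surplusSet (flip E)) he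
  omega

end Surplus

theorem stmt3 {X Y : Type*} [Fintype X] [Fintype Y] (E : X → Y → Prop)
    (hnc : ∃ x y, ¬ E x y) :
    (Fintype.card Y : ℤ) -
        sInf {d : ℤ | ∃ A : Set X, A.Nonempty ∧ nbrX E A ≠ Set.univ ∧
          d = ((nbrX E A).ncard : ℤ) - A.ncard}
      = (Fintype.card X : ℤ) -
        sInf {d : ℤ | ∃ B : Set Y, B.Nonempty ∧ nbrY E B ≠ Set.univ ∧
          d = ((nbrY E B).ncard : ℤ) - B.ncard} := by
  obtain ⟨x, y, hxy⟩ := hnc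
  have hX := csInf_surplusSet_flip_le E (surplusSet_nonempty E hxy)
  have hY : sInf (surplusSet E) ≤ sInf (surplusSet (flip E)) + Nat.card Y - Nat.card X :=
    csInf_surplusSet_flip_le (flip E) (surplusSet_nonempty (flip E) hxy)
  change (Fintype.card Y : ℤ) - sInf (surplusSet E) =
    Fintype.card X - sInf (surplusSet (flip E))
  rw [Nat.card_eq_fintype_card, Nat.card_eq_fintype_card] at hX hY
  omega
end

section
/- Let G be a non-complete bipartite graph with parts X and Y, and let F(X) be the set of intersections with X of maximum-sized nontrivial independent sets. If A ∈ F(X) then Y \ N(A) ∈ F(Y) and N(Y \ N(A)) = X \ A. -/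
/-- `(A, B)` is a nontrivial independent set of the bipartite graph `E`:
both parts are non-empty and there are no edges between them. -/
def NontrivIndep {X Y : Type*} (E : X → Y → Prop) (A : Set X) (B : Set Y) : Prop :=
  A.Nonempty ∧ B.Nonempty ∧ ∀ a ∈ A, ∀ b ∈ B, ¬ E a b

/-- `A` is the trace on `X` of a maximum-sized nontrivial independent set. -/
def FragX {X Y : Type*} (E : X → Y → Prop) (A : Set X) : Prop :=
  ∃ B : Set Y, NontrivIndep E A B ∧
    ∀ (A' : Set X) (B' : Set Y), NontrivIndep E A' B' →
      A'.ncard + B'.ncard ≤ A.ncard + B.ncard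

/-- `B` is the trace on `Y` of a maximum-sized nontrivial independent set. -/
def FragY {X Y : Type*} (E : X → Y → Prop) (B : Set Y) : Prop :=
  ∃ A : Set X, NontrivIndep E A B ∧
    ∀ (A' : Set X) (B' : Set Y), NontrivIndep E A' B' →
      A'.ncard + B'.ncard ≤ A.ncard + B.ncard

/-!
A maximum nontrivial independent set `A ∪ B` can only grow when `B` is replaced by
`Y \ N(A)`, so `A ∪ (Y \ N(A))` is maximum as well. Maximality then forces every
`x ∉ A` to have a neighbour in `Y \ N(A)`, since otherwise `x` could be added to `A`.
-/

def IsMaxNontrivIndep {X Y : Type*} (E : X → Y → Prop) (A : Set X) (B : Set Y) : Prop :=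
  NontrivIndep E A B ∧
    ∀ (A' : Set X) (B' : Set Y), NontrivIndep E A' B' →
      A'.ncard + B'.ncard ≤ A.ncard + B.ncard

section

variable {X Y : Type*} (E : X → Y → Prop)

variable {E}

theorem NontrivIndep.subset_compl_nbrX {A : Set X} {B : Set Y} (h : NontrivIndep E A B) :
    B ⊆ (nbrX E A)ᶜ :=
  fun b hb ⟨a, ha, hab⟩ => h.2.2 a ha b hb hab

theorem NontrivIndep.compl_nbrX {A : Set X} {B : Set Y} (h : NontrivIndep E A B) :
    NontrivIndep E A (nbrX E A)ᶜ :=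
  ⟨h.1, h.2.1.mono h.subset_compl_nbrX, fun a ha _ hb hab => hb ⟨a, ha, hab⟩⟩

theorem NontrivIndep.insert {A : Set X} {B : Set Y} (h : NontrivIndep E A B) {x : X}
    (hx : ∀ b ∈ B, ¬ E x b) : NontrivIndep E (insert x A) B := by
  refine ⟨Set.insert_nonempty x A, h.2.1, ?_⟩
  rintro a (rfl | ha)
  exacts [hx, h.2.2 a ha]

theorem IsMaxNontrivIndep.compl_nbrX [Finite Y] {A : Set X} {B : Set Y}
    (h : IsMaxNontrivIndep E A B) : IsMaxNontrivIndep E A (nbrX E A)ᶜ := by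
  have hle : B.ncard ≤ (nbrX E A)ᶜ.ncard := Set.ncard_le_ncard h.1.subset_compl_nbrX
  exact ⟨h.1.compl_nbrX, fun A' B' h' => (h.2 A' B' h').trans (by omega)⟩

theorem IsMaxNontrivIndep.compl_subset_nbrY [Finite X] {A : Set X} {B : Set Y}
    (h : IsMaxNontrivIndep E A B) : Aᶜ ⊆ nbrY E B := by
  intro x hxA
  by_contra hx
  have hgrow := h.2 _ _ (h.1.insert fun b hb hxb => hx ⟨b, hb, hxb⟩)
  rw [Set.ncard_insert_of_notMem hxA] at hgrow
  omega

end

theorem stmt4_general {X Y : Type*} [Fintype X] [Fintype Y] (E : X → Y → Prop)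
    (A : Set X) (hA : FragX E A) :
    FragY E ((nbrX E A)ᶜ) ∧ nbrY E ((nbrX E A)ᶜ) = Aᶜ := by
  obtain ⟨B, hB⟩ := hA
  have hmax : IsMaxNontrivIndep E A (nbrX E A)ᶜ := IsMaxNontrivIndep.compl_nbrX hB
  exact ⟨⟨A, hmax⟩, (nbrY_compl_nbrX_subset E A).antisymm hmax.compl_subset_nbrY⟩

theorem stmt4 {X Y : Type*} [Fintype X] [Fintype Y] (E : X → Y → Prop)
    (hnc : ∃ x y, ¬ E x y) (A : Set X) (hA : FragX E A) :
    FragY E ((nbrX E A)ᶜ) ∧ nbrY E ((nbrX E A)ᶜ) = Aᶜ :=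
  stmt4_general E A hA
end

section
/- Let n, t, r, s be positive integers with t ≤ min{r,s}, r + s − t < n, and r < r' ≤ n. Fix an r-set x = [r] and an (r')-set x' = [r'] in [n]. Then the number of s-subsets y of [n] with |y ∩ x| ≥ t is at most the number of s-subsets y with |y ∩ x'| ≥ t, minus t(s − t + 1). -/
/-!
Every `s`-set meeting `x` in at least `t` points also meets `x' ⊇ x` in at least `t` points,
so it suffices to exhibit `t (s - t + 1)` further `s`-sets that meet `x'` but not `x` in `t`
points. Fix `a ∈ x' \ x`, a `t`-set `b ⊆ x` and an `(s - t + 1)`-set `P` outside `x'`; the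
sets `{a} ∪ u ∪ v` with `u` a `(t - 1)`-subset of `b` and `v` an `(s - t)`-subset of `P` do,
and they are distinct because `u` and `v` are recovered by intersecting with `b` and `P`.
-/

open Finset

section
variable {α : Type*} [DecidableEq α] {a : α} {u v w : Finset α}

theorem insert_union_inter_of_notMem (ha : a ∉ w) (hu : u ⊆ w) (hv : Disjoint v w) :
    insert a (u ∪ v) ∩ w = u := by
  rw [insert_inter_of_notMem ha, union_inter_distrib_right, inter_eq_left.2 hu,
    disjoint_iff_inter_eq_empty.1 hv, union_empty]

theorem insert_union_inter_of_mem (ha : a ∈ w) (hu : u ⊆ w) (hv : Disjoint v w) :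
    insert a (u ∪ v) ∩ w = insert a u := by
  rw [insert_inter_of_mem ha, union_inter_distrib_right, inter_eq_left.2 hu,
    disjoint_iff_inter_eq_empty.1 hv, union_empty]

theorem injOn_insert_union {b P : Finset α} (hab : a ∉ b) (haP : a ∉ P) (hbP : Disjoint b P) :
    Set.InjOn (fun uv : Finset α × Finset α => insert a (uv.1 ∪ uv.2))
      {uv | uv.1 ⊆ b ∧ uv.2 ⊆ P} := by
  rintro ⟨u, v⟩ ⟨hu, hv⟩ ⟨u', v'⟩ ⟨hu', hv'⟩ h
  dsimp only at hu hv hu' hv' h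
  refine Prod.ext ?_ ?_
  · calc u = insert a (u ∪ v) ∩ b :=
          (insert_union_inter_of_notMem hab hu (hbP.symm.mono_left hv)).symm
      _ = insert a (u' ∪ v') ∩ b := by rw [h]
      _ = u' := insert_union_inter_of_notMem hab hu' (hbP.symm.mono_left hv')
  · calc v = insert a (v ∪ u) ∩ P :=
          (insert_union_inter_of_notMem haP hv (hbP.mono_left hu)).symm
      _ = insert a (v' ∪ u') ∩ P := by rw [union_comm v, union_comm v', h]
      _ = v' := insert_union_inter_of_notMem haP hv' (hbP.mono_left hu')

end

variable {α : Type*} [Fintype α] [DecidableEq α]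

def meetingFamily (s t : ℕ) (x : Finset α) : Finset (Finset α) :=
  {y ∈ powersetCard s univ | t ≤ #(y ∩ x)}

variable {x x' : Finset α} {s t : ℕ}

theorem meetingFamily_mono (hxx' : x ⊆ x') : meetingFamily s t x ⊆ meetingFamily s t x' :=
  monotone_filter_right _ fun _ _ h =>
    h.trans (card_le_card (inter_subset_inter_left hxx'))

theorem insert_union_mem_meetingFamily_sdiff {a : α} {u v : Finset α} (hxx' : x ⊆ x')
    (hax' : a ∈ x') (hax : a ∉ x) (hux : u ⊆ x) (hvx' : Disjoint v x') (hu : #u + 1 = t)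
    (huv : #u + #v + 1 = s) :
    insert a (u ∪ v) ∈ meetingFamily s t x' \ meetingFamily s t x := by
  have hau : a ∉ u := fun h => hax (hux h)
  have hav : a ∉ v := disjoint_right.1 hvx' hax'
  have huv_disj : Disjoint u v := (hvx'.mono_right (hux.trans hxx')).symm
  simp only [meetingFamily, mem_sdiff, mem_filter, mem_powersetCard_univ]
  rw [card_insert_of_notMem (by simp [hau, hav]), card_union_of_disjoint huv_disj,
    insert_union_inter_of_mem hax' (hux.trans hxx') hvx', card_insert_of_notMem hau,
    insert_union_inter_of_notMem hax hux (hvx'.mono_right hxx')]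
  omega

theorem card_meetingFamily_add_le (hxx' : x ⊂ x') (ht : 0 < t) (htx : t ≤ #x)
    (hts : t ≤ s) (hx' : s - t + 1 ≤ #x'ᶜ) :
    #(meetingFamily s t x) + t * (s - t + 1) ≤ #(meetingFamily s t x') := by
  obtain ⟨a, hax', hax⟩ := exists_of_ssubset hxx'
  obtain ⟨b, hbx, hb⟩ := exists_subset_card_eq htx
  obtain ⟨P, hPc, hP⟩ := exists_subset_card_eq hx'
  have hPx' : Disjoint P x' := le_compl_iff_disjoint_right.1 hPc
  have hab : a ∉ b := fun h => hax (hbx h)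
  have haP : a ∉ P := disjoint_right.1 hPx' hax'
  have hbP : Disjoint b P := (hPx'.mono_right (hbx.trans hxx'.subset)).symm
  set D := (b.powersetCard (t - 1) ×ˢ P.powersetCard (s - t)).image
    fun uv => insert a (uv.1 ∪ uv.2)
  have hD : #D = t * (s - t + 1) := by
    rw [card_image_of_injOn, card_product, card_powersetCard, card_powersetCard, hb, hP,
      Nat.choose_succ_self_right]
    · obtain ⟨m, rfl⟩ := Nat.exists_eq_add_of_lt ht
      simp
    · exact (injOn_insert_union hab haP hbP).mono fun uv huv => by
        simp only [coe_product, Set.mem_prod, mem_coe, mem_powersetCard] at huv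
        exact ⟨huv.1.1, huv.2.1⟩
  have hDsub : D ⊆ meetingFamily s t x' \ meetingFamily s t x := by
    simp only [D, image_subset_iff, mem_product, mem_powersetCard]
    rintro ⟨u, v⟩ ⟨⟨hub, hu⟩, hvP, hv⟩
    exact insert_union_mem_meetingFamily_sdiff hxx'.subset hax' hax (hub.trans hbx)
      (hPx'.mono_left hvP) (by omega) (by omega)
  rw [← hD, add_comm, ← card_sdiff_add_card_eq_card (meetingFamily_mono hxx'.subset)]
  exact Nat.add_le_add_right (card_le_card hDsub) _

theorem stmt7_general (n t r r' s : ℕ) (ht : 0 < t) (htr : t ≤ r) (hts : t ≤ s)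
    (hrr' : r < r') (hr's : r' + s - t < n)
    (x x' : Finset (Fin n)) (hxx' : x ⊆ x')
    (hx : x.card = r) (hx' : x'.card = r') :
    ((Finset.univ.powersetCard s).filter (fun y => t ≤ (y ∩ x).card)).card
        + t * (s - t + 1)
      ≤ ((Finset.univ.powersetCard s).filter (fun y => t ≤ (y ∩ x').card)).card := by
  have hssub : x ⊂ x' := ssubset_of_subset_of_ne hxx' (by rintro rfl; omega)
  have hcompl : s - t + 1 ≤ #x'ᶜ := by
    rw [card_compl, Fintype.card_fin, hx']
    omega
  exact card_meetingFamily_add_le hssub ht (hx ▸ htr) hts hcompl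

theorem stmt7 (n t r r' s : ℕ) (ht : 0 < t) (htr : t ≤ r) (hts : t ≤ s)
    (hrr' : r < r') (hr'n : r' ≤ n) (hrs : r + s - t < n) (hr's : r' + s - t < n)
    (x x' : Finset (Fin n)) (hxx' : x ⊆ x')
    (hx : x.card = r) (hx' : x'.card = r') :
    ((Finset.univ.powersetCard s).filter (fun y => t ≤ (y ∩ x).card)).card
        + t * (s - t + 1)
      ≤ ((Finset.univ.powersetCard s).filter (fun y => t ≤ (y ∩ x').card)).card :=
  stmt7_general n t r r' s ht htr hts hrr' hr's x x' hxx' hx hx'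
end

section
/- Let n, t, r, s be positive integers with t ≤ s ≤ r and r + s − t < n. For any two distinct r-subsets x, x' of [n], the number of s-subsets y of [n] satisfying both |y ∩ x| ≥ t and |y ∩ x'| ≥ t is strictly less than the number of s-subsets y satisfying |y ∩ x| ≥ t. -/
/-!
Pick `a ∈ x \ x'` and a `t`-set `A ⊆ x` through `a`, so that `A` meets `x'` in fewer than `t`
points. Enlarge `A ∩ x'` to a `(t - 1)`-subset `T` of `x'`. Every `s`-set `y` with
`A ⊆ y ⊆ x'ᶜ ∪ T` meets `x` in at least `t` points and `x'` in at most `t - 1`; such a `y` exists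
because `#(x'ᶜ ∪ T) = n - r + t - 1 ≥ s`.
-/

open Finset

namespace Finset

variable {α : Type*} [DecidableEq α]

lemma exists_subset_card_eq_card_inter_lt {x x' : Finset α} {t : ℕ} (hx : ¬x ⊆ x')
    (ht : 0 < t) (htx : t ≤ #x) : ∃ A ⊆ x, #A = t ∧ #(A ∩ x') < t := by
  obtain ⟨a, hax, hax'⟩ := not_subset.1 hx
  obtain ⟨A, haA, hAx, hA⟩ :=
    exists_subsuperset_card_eq (singleton_subset_iff.2 hax) (by rw [card_singleton]; omega) htx
  have hAx' : A ∩ x' ⊂ A := (ssubset_iff_of_subset inter_subset_left).2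
    ⟨a, singleton_subset_iff.1 haA, fun h => hax' (mem_inter.1 h).2⟩
  exact ⟨A, hAx, hA, hA ▸ card_lt_card hAx'⟩

variable [Fintype α]

lemma exists_card_eq_le_card_inter_and_card_inter_lt {x x' : Finset α} {t s : ℕ}
    (hx : ¬x ⊆ x') (ht : 0 < t) (htx : t ≤ #x) (htx' : t ≤ #x' + 1) (hts : t ≤ s)
    (hs : s + #x' < Fintype.card α + t) :
    ∃ y : Finset α, #y = s ∧ t ≤ #(y ∩ x) ∧ #(y ∩ x') < t := by
  obtain ⟨A, hAx, hA, hAx'⟩ := exists_subset_card_eq_card_inter_lt hx ht htx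
  obtain ⟨T, hAT, hTx', hT⟩ := exists_subsuperset_card_eq (s := A ∩ x') inter_subset_right
    (by omega) (by omega : t - 1 ≤ #x')
  have hAC : A ⊆ x'ᶜ ∪ T := fun a ha => by
    by_cases hax' : a ∈ x'
    · exact mem_union_right _ (hAT (mem_inter.2 ⟨ha, hax'⟩))
    · exact mem_union_left _ (mem_compl.2 hax')
  have hC : #(x'ᶜ ∪ T) = Fintype.card α - #x' + (t - 1) := by
    rw [card_union_of_disjoint (disjoint_compl_left.mono_right hTx'), card_compl, hT]
  have hx'α := card_le_univ x'
  obtain ⟨y, hAy, hyC, hy⟩ := exists_subsuperset_card_eq hAC (by omega : #A ≤ s) (by omega)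
  refine ⟨y, hy, hA ▸ card_le_card (subset_inter hAy hAx), ?_⟩
  have hyx' : y ∩ x' ⊆ T := fun a ha => by
    obtain ⟨hay, hax'⟩ := mem_inter.1 ha
    simpa [hax'] using hyC hay
  have hyT := card_le_card hyx'
  omega

end Finset

theorem stmt8 (n t r s : ℕ) (ht : 0 < t) (hts : t ≤ s) (hsr : s ≤ r)
    (hrs : r + s - t < n)
    (x x' : Finset (Fin n)) (hne : x ≠ x')
    (hx : x.card = r) (hx' : x'.card = r) :
    ((Finset.univ.powersetCard s).filter
        (fun y => t ≤ (y ∩ x).card ∧ t ≤ (y ∩ x').card)).card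
      < ((Finset.univ.powersetCard s).filter (fun y => t ≤ (y ∩ x).card)).card := by
  have hxx' : ¬x ⊆ x' := fun h => hne (eq_of_subset_of_card_le h (by rw [hx, hx']))
  obtain ⟨y, hy, hyx, hyx'⟩ := exists_card_eq_le_card_inter_and_card_inter_lt hxx' ht
    (by omega) (by omega) hts (by rw [Fintype.card_fin]; omega)
  rw [← filter_filter]
  refine card_lt_card (filter_ssubset.2 ⟨y, ?_, hyx'.not_ge⟩)
  exact mem_filter.2 ⟨mem_powersetCard_univ.2 hy, hyx⟩
end

section
/- Let n = 2r with r ≥ 2, let t, s be positive integers with t ≤ min{r,s} and r + s − t < n, and let x be an r-subset of [n] with complement x̄ = [n]\x. Then the number of s-subsets y with |y ∩ x| ≥ t and |y ∩ x̄| ≥ t is at most (number of s-subsets y with |y ∩ x| ≥ t) − 1; moreover if r ≠ s, or r = s and t > 1 (with s > t), the difference is at least 2. -/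
/-!
Every `s`-set `y` with `|y ∩ x| ≥ t` but `|y ∩ x̄| < t` is counted on the right and not on the left,
so it suffices to find one (resp. two) of them. Such sets are the unions `a ∪ b` with `a ⊆ x`,
`b ⊆ x̄`, `|a| = k ≥ t`, `|b| = s - k < t`; for a single admissible `k` there are
`C(r, k) C(r, s - k)` of them, and `k = min s r` (or `k = r - 1` when `r = s`) does the job.
-/

open Finset

namespace Nat

lemma two_le_choose {n k : ℕ} (hk : 0 < k) (hkn : k < n) : 2 ≤ n.choose k := by
  obtain ⟨m, rfl⟩ : ∃ m, n = m + 1 := ⟨n - 1, by omega⟩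
  obtain ⟨j, rfl⟩ : ∃ j, k = j + 1 := ⟨k - 1, by omega⟩
  have h₁ := choose_pos (n := m) (k := j) (by omega)
  have h₂ := choose_pos (n := m) (k := j + 1) (by omega)
  rw [choose_succ_succ']
  omega

end Nat

namespace Finset

variable {α : Type*} [DecidableEq α] [Fintype α]

lemma union_inter_eq_left_of_subset_compl {a b x : Finset α} (ha : a ⊆ x) (hb : b ⊆ xᶜ) :
    (a ∪ b) ∩ x = a := by
  rw [union_inter_distrib_right, inter_eq_left.2 ha,
    disjoint_iff_inter_eq_empty.1 (disjoint_compl_left.mono_left hb), union_empty]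

lemma union_inter_compl_eq_right_of_subset_compl {a b x : Finset α} (ha : a ⊆ x)
    (hb : b ⊆ xᶜ) : (a ∪ b) ∩ xᶜ = b := by
  rw [union_comm]
  exact union_inter_eq_left_of_subset_compl hb (by rwa [compl_compl])

variable (x : Finset α) {s t k : ℕ}

lemma card_filter_both_add_card_filter_lt (s t : ℕ) :
    #{y ∈ powersetCard s univ | t ≤ #(y ∩ x) ∧ t ≤ #(y ∩ xᶜ)} +
        #{y ∈ powersetCard s univ | t ≤ #(y ∩ x) ∧ #(y ∩ xᶜ) < t} =
      #{y ∈ powersetCard s univ | t ≤ #(y ∩ x)} := by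
  simp only [← filter_filter, ← not_le]
  exact card_filter_add_card_filter_not _

lemma choose_mul_choose_le_card_filter_lt (hk : t ≤ k) (hsk : s - k < t) (hks : k ≤ s) :
    (#x).choose k * (#xᶜ).choose (s - k) ≤
      #{y ∈ powersetCard s univ | t ≤ #(y ∩ x) ∧ #(y ∩ xᶜ) < t} := by
  rw [← card_powersetCard, ← card_powersetCard, ← card_product]
  refine card_le_card_of_injOn (fun p => p.1 ∪ p.2) ?_ ?_
  · rintro ⟨a, b⟩ hab
    simp only [coe_product, Set.mem_prod, mem_coe, mem_powersetCard] at hab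
    obtain ⟨⟨ha, hak⟩, hb, hbk⟩ := hab
    simp only [coe_filter, Set.mem_ofPred_eq, mem_powersetCard_univ,
      card_union_of_disjoint (disjoint_compl_right.mono ha hb),
      union_inter_eq_left_of_subset_compl ha hb, union_inter_compl_eq_right_of_subset_compl ha hb]
    omega
  · rintro ⟨a, b⟩ hab ⟨a', b'⟩ hab' h
    simp only [coe_product, Set.mem_prod, mem_coe, mem_powersetCard] at hab hab' h
    have hx := congrArg (· ∩ x) h
    have hxc := congrArg (· ∩ xᶜ) h
    simp only [union_inter_eq_left_of_subset_compl, union_inter_compl_eq_right_of_subset_compl,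
      hab.1.1, hab.2.1, hab'.1.1, hab'.2.1] at hx hxc
    exact Prod.ext hx hxc

end Finset

theorem stmt9_general (n t r s : ℕ) (hn : n = 2 * r)
    (ht : 0 < t) (htr : t ≤ r) (hts : t ≤ s) (hrs : r + s - t < n)
    (x : Finset (Fin n)) (hx : x.card = r) :
    ((Finset.univ.powersetCard s).filter
          (fun y => t ≤ (y ∩ x).card ∧ t ≤ (y ∩ xᶜ).card)).card + 1
        ≤ ((Finset.univ.powersetCard s).filter (fun y => t ≤ (y ∩ x).card)).card ∧
      (r ≠ s ∨ (r = s ∧ 1 < t ∧ t < s) →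
        ((Finset.univ.powersetCard s).filter
            (fun y => t ≤ (y ∩ x).card ∧ t ≤ (y ∩ xᶜ).card)).card + 2
          ≤ ((Finset.univ.powersetCard s).filter (fun y => t ≤ (y ∩ x).card)).card) := by
  have hxc : #xᶜ = r := by rw [card_compl, Fintype.card_fin, hx]; omega
  have hsplit := card_filter_both_add_card_filter_lt x s t
  have hbound := fun k (hk : t ≤ k) (hsk : s - k < t) (hks : k ≤ s) =>
    choose_mul_choose_le_card_filter_lt x hk hsk hks
  simp only [hx, hxc] at hbound
  constructor
  · have hpos : 0 < r.choose (min s r) * r.choose (s - min s r) :=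
      Nat.mul_pos (Nat.choose_pos (min_le_right _ _)) (Nat.choose_pos (by omega))
    have := hbound (min s r) (le_min hts htr) (by omega) (min_le_left _ _)
    omega
  · intro hcase
    obtain ⟨k, hk, hsk, hks, htwo⟩ : ∃ k, t ≤ k ∧ s - k < t ∧ k ≤ s ∧
        2 ≤ r.choose k * r.choose (s - k) := by
      rcases lt_trichotomy s r with hsr | rfl | hsr
      · refine ⟨s, hts, by omega, le_rfl, ?_⟩
        simpa using Nat.two_le_choose (by omega) hsr
      · refine ⟨s - 1, by omega, by omega, by omega, ?_⟩
        exact le_mul_of_le_of_one_le (Nat.two_le_choose (by omega) (by omega))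
          (Nat.choose_pos (by omega))
      · refine ⟨r, htr, by omega, hsr.le, ?_⟩
        simpa using Nat.two_le_choose (k := s - r) (by omega) (by omega)
    have := hbound k hk hsk hks
    omega

theorem stmt9 (n t r s : ℕ) (hn : n = 2 * r) (hr : 2 ≤ r)
    (ht : 0 < t) (htr : t ≤ r) (hts : t ≤ s) (hrs : r + s - t < n)
    (x : Finset (Fin n)) (hx : x.card = r) :
    ((Finset.univ.powersetCard s).filter
          (fun y => t ≤ (y ∩ x).card ∧ t ≤ (y ∩ xᶜ).card)).card + 1
        ≤ ((Finset.univ.powersetCard s).filter (fun y => t ≤ (y ∩ x).card)).card ∧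
      (r ≠ s ∨ (r = s ∧ 1 < t ∧ t < s) →
        ((Finset.univ.powersetCard s).filter
            (fun y => t ≤ (y ∩ x).card ∧ t ≤ (y ∩ xᶜ).card)).card + 2
          ≤ ((Finset.univ.powersetCard s).filter (fun y => t ≤ (y ∩ x).card)).card) :=
  stmt9_general n t r s hn ht htr hts hrs x hx
end

section
/- Let V be an n-dimensional vector space over F_q, let t ≤ s ≤ r be positive integers with r + s − t < n. For any two distinct r-dimensional subspaces x, x' of V, the number of s-dimensional subspaces y with dim(y∩x) ≥ t and dim(y∩x') ≥ t is strictly less than the number of s-dimensional subspaces y with dim(y∩x) ≥ t. -/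
/-!
Pick `z ≥ z₀` of dimension `s`, where `z₀ ≤ x` has dimension `t` and `z₀ ⊄ x'`, while keeping
`z ⊔ x'` as large as possible: each new vector is chosen outside `z ⊔ x'` until that sum is all
of `V`. Since `n > r + s - t`, this forces `dim (z ⊔ x') > r + s - t`, i.e. `dim (z ⊓ x') < t`.
So `z` is counted on the right but not on the left.
-/

open Module Submodule

namespace Submodule

variable {K V : Type*} [Field K] [AddCommGroup V] [Module K V] [FiniteDimensional K V]

theorem exists_mem_notMem_min_finrank_sup_le {y A : Submodule K V} (U : Submodule K V)
    (hyA : y < A) :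
    ∃ v ∈ A, v ∉ y ∧
      min (finrank K ↥(A ⊔ U)) (finrank K ↥(y ⊔ U) + 1) ≤ finrank K ↥(y ⊔ K ∙ v ⊔ U) := by
  by_cases hA : A ≤ y ⊔ U
  · obtain ⟨v, hvA, hvy⟩ := SetLike.exists_of_lt hyA
    refine ⟨v, hvA, hvy, min_le_left _ _ |>.trans (finrank_mono ?_)⟩
    exact sup_le (hA.trans (sup_le_sup_right le_sup_left U)) le_sup_right
  · obtain ⟨v, hvA, hvyU⟩ := SetLike.not_le_iff_exists.mp hA
    refine ⟨v, hvA, fun hv => hvyU (mem_sup_left hv), min_le_right _ _ |>.trans_eq ?_⟩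
    rw [sup_right_comm, finrank_sup_span_singleton hvyU]

theorem exists_le_le_finrank_eq_min_le_finrank_sup {w A : Submodule K V} (U : Submodule K V)
    (hwA : w ≤ A) {k : ℕ} (hwk : finrank K w ≤ k) (hkA : k ≤ finrank K A) :
    ∃ z, w ≤ z ∧ z ≤ A ∧ finrank K z = k ∧
      min (finrank K ↥(A ⊔ U)) (finrank K ↥(w ⊔ U) + (k - finrank K w))
        ≤ finrank K ↥(z ⊔ U) := by
  induction k, hwk using Nat.le_induction with
  | base => exact ⟨w, le_rfl, hwA, rfl, by simp⟩
  | succ k hwk ih =>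
    obtain ⟨z, hwz, hzA, hzk, hzU⟩ := ih (by omega)
    have hzA' : z < A := lt_of_le_of_ne hzA fun h => by rw [h] at hzk; omega
    obtain ⟨v, hvA, hvz, hv⟩ := exists_mem_notMem_min_finrank_sup_le U hzA'
    have hzUA : finrank K ↥(z ⊔ U) ≤ finrank K ↥(A ⊔ U) := finrank_mono (sup_le_sup_right hzA U)
    refine ⟨z ⊔ K ∙ v, le_sup_of_le_left hwz,
      sup_le hzA ((span_singleton_le_iff_mem v A).mpr hvA),
      by rw [finrank_sup_span_singleton hvz, hzk], ?_⟩
    omega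

end Submodule

theorem Nat.card_subtype_lt_card_subtype {α : Type*} [Finite α] {p q : α → Prop}
    (hpq : ∀ a, p a → q a) {a : α} (hqa : q a) (hpa : ¬ p a) :
    Nat.card {a // p a} < Nat.card {a // q a} :=
  Set.ncard_lt_ncard (s := {a | p a}) (t := {a | q a})
    (Set.ssubset_iff_of_subset hpq |>.mpr ⟨a, hqa, hpa⟩)

theorem stmt10_general (n t r s : ℕ)
    (K : Type*) [Field K] [Fintype K]
    (V : Type*) [AddCommGroup V] [Module K V] [FiniteDimensional K V]
    (hn : Module.finrank K V = n)
    (ht : 0 < t) (hts : t ≤ s) (hsr : s ≤ r) (hrs : r + s - t < n)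
    (x x' : Submodule K V) (hne : x ≠ x')
    (hx : Module.finrank K x = r) (hx' : Module.finrank K x' = r) :
    Nat.card {y : Submodule K V // Module.finrank K y = s ∧
        t ≤ Module.finrank K ↥(y ⊓ x) ∧ t ≤ Module.finrank K ↥(y ⊓ x')}
      < Nat.card {y : Submodule K V // Module.finrank K y = s ∧
        t ≤ Module.finrank K ↥(y ⊓ x)} := by
  have : Finite V := Module.finite_of_finite K
  have hxx' : r < finrank K ↥(x ⊔ x') := by
    refine hx' ▸ finrank_lt_finrank_of_lt (lt_of_le_of_ne le_sup_right fun h => hne ?_)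
    exact eq_of_le_of_finrank_eq (sup_eq_right.mp h.symm) (hx.trans hx'.symm)
  obtain ⟨z₀, -, hz₀x, hz₀t, hz₀⟩ :=
    exists_le_le_finrank_eq_min_le_finrank_sup (A := x) x' bot_le (k := t) (by simp) (by omega)
  rw [bot_sup_eq, finrank_bot] at hz₀
  obtain ⟨z, hz₀z, -, hzs, hz⟩ := exists_le_le_finrank_eq_min_le_finrank_sup (w := z₀) x' le_top
    (k := s) (by omega) (by rw [finrank_top]; omega)
  rw [top_sup_eq, finrank_top] at hz
  have hzx : t ≤ finrank K ↥(z ⊓ x) := hz₀t ▸ finrank_mono (le_inf hz₀z hz₀x)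
  have hzx' : finrank K ↥(z ⊓ x') < t := by
    have := finrank_sup_add_finrank_inf_eq z x'
    have := finrank_mono (sup_le_sup_right hz₀z x')
    omega
  exact Nat.card_subtype_lt_card_subtype (fun y hy => ⟨hy.1, hy.2.1⟩) ⟨hzs, hzx⟩
    fun h => h.2.2.not_gt hzx'

theorem stmt10 (q n t r s : ℕ)
    (K : Type*) [Field K] [Fintype K] (hK : Fintype.card K = q)
    (V : Type*) [AddCommGroup V] [Module K V] [FiniteDimensional K V]
    (hn : Module.finrank K V = n)
    (ht : 0 < t) (hts : t ≤ s) (hsr : s ≤ r) (hrs : r + s - t < n)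
    (x x' : Submodule K V) (hne : x ≠ x')
    (hx : Module.finrank K x = r) (hx' : Module.finrank K x' = r) :
    Nat.card {y : Submodule K V // Module.finrank K y = s ∧
        t ≤ Module.finrank K ↥(y ⊓ x) ∧ t ≤ Module.finrank K ↥(y ⊓ x')}
      < Nat.card {y : Submodule K V // Module.finrank K y = s ∧
        t ≤ Module.finrank K ↥(y ⊓ x)} :=
  stmt10_general n t r s K V hn ht hts hsr hrs x x' hne hx hx'
end

section
/- Let V be an n-dimensional vector space over F_q, let t be a positive integer, and let r < r' and s be positive integers with t ≤ min{r,s} and r' + s − t < n. If x ⊆ x' are subspaces of V with dim x = r and dim x' = r', then the number of s-dimensional subspaces y with dim(y ∩ x) ≥ t is at most (the number of s-dimensional subspaces y with dim(y ∩ x') ≥ t) − 2. -/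
/-!
Every `y` counted on the left is counted on the right, so it suffices to exhibit two
`s`-dimensional subspaces meeting `x'` in dimension `t` but `x` in dimension `< t`. Fix `w₀ ≤ x`
of dimension `t - 1`, a vector `v ∈ x' \ x` and `z ∈ x \ w₀`. The subspaces `w₀ ⊔ ⟨v⟩` and
`w₀ ⊔ ⟨v + z⟩` of `x'` are distinct, `t`-dimensional, and meet `x` exactly in `w₀`. Adding to both
the same `(s - t)`-dimensional subspace `c` with `c ⊓ x' = ⊥` (possible since `r' + s - t ≤ n`)
gives the two required subspaces, and they are still distinct because `(w ⊔ c) ⊓ x' = w`.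
-/

open Module Submodule

theorem Set.ncard_add_two_le_of_nontrivial_diff {α : Type*} {A B : Set α} (hAB : A ⊆ B)
    (hB : B.Finite) (h : (B \ A).Nontrivial) : A.ncard + 2 ≤ B.ncard := by
  have : Finite ↥(B \ A) := (hB.subset Set.sdiff_subset).to_subtype
  have h₁ := Set.one_lt_ncard_iff_nontrivial.mpr h
  have h₂ := Set.ncard_sdiff_add_ncard_of_subset hAB hB
  omega

namespace Submodule

variable {K V : Type*} [DivisionRing K] [AddCommGroup V] [Module K V]

theorem sup_inf_eq_left_of_disjoint {w c x : Submodule K V} (hw : w ≤ x) (hc : Disjoint c x) :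
    (w ⊔ c) ⊓ x = w := by
  rw [sup_inf_assoc_of_le c hw, hc.eq_bot, sup_bot_eq]

theorem exists_le_finrank_eq (W : Submodule K V) {k : ℕ} (hk : k ≤ finrank K W) :
    ∃ w ≤ W, finrank K w = k := by
  obtain ⟨f, hf⟩ := exists_linearIndependent_of_le_finrank (R := K) (M := W) hk
  refine ⟨span K (Set.range (W.subtype ∘ f)), ?_, ?_⟩
  · rw [span_le]
    rintro _ ⟨i, rfl⟩
    exact (f i).2
  · rw [finrank_span_eq_card (hf.map' W.subtype (ker_subtype W)), Fintype.card_fin]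

theorem finrank_sup_of_disjoint [FiniteDimensional K V] {w c : Submodule K V} (h : Disjoint w c) :
    finrank K ↥(w ⊔ c) = finrank K w + finrank K c := by
  rw [← finrank_sup_add_finrank_inf_eq, h.eq_bot, finrank_bot, add_zero]

end Submodule

section

variable {K V : Type*} [DivisionRing K] [AddCommGroup V] [Module K V] [FiniteDimensional K V]
  {x x' : Submodule K V} {t : ℕ}

theorem nontrivial_finrank_eq_finrank_inf_lt (hxx' : x < x') (ht : 0 < t)
    (htx : t ≤ finrank K x) :
    {w : Submodule K V | w ≤ x' ∧ finrank K w = t ∧ finrank K ↥(w ⊓ x) < t}.Nontrivial := by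
  obtain ⟨w₀, hw₀x, hw₀⟩ := x.exists_le_finrank_eq (k := t - 1) (by omega)
  obtain ⟨v, hvx', hvx⟩ := SetLike.exists_of_lt hxx'
  obtain ⟨z, hzx, hzw₀⟩ := SetLike.exists_of_lt <| lt_of_le_of_ne hw₀x <| by
    rintro rfl
    omega
  have hinf {u : V} (hu : u ∉ x) : (w₀ ⊔ span K {u}) ⊓ x = w₀ :=
    sup_inf_eq_left_of_disjoint hw₀x (disjoint_span_singleton_of_notMem hu).symm
  have hmem {u : V} (hux' : u ∈ x') (hux : u ∉ x) :
      w₀ ⊔ span K {u} ∈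
        {w : Submodule K V | w ≤ x' ∧ finrank K w = t ∧ finrank K ↥(w ⊓ x) < t} := by
    refine ⟨sup_le (hw₀x.trans hxx'.le) ((span_singleton_le_iff_mem _ _).mpr hux'), ?_, ?_⟩
    · rw [finrank_sup_span_singleton fun h => hux (hw₀x h)]
      omega
    · rw [hinf hux]
      omega
  have hvz : v + z ∉ x := fun h => hvx (by simpa using x.sub_mem h hzx)
  refine ⟨_, hmem hvx' hvx, _, hmem (x'.add_mem hvx' (hxx'.le hzx)) hvz, fun heq => hzw₀ ?_⟩
  -- `z = (v + z) - v` lies in both spans, hence in `(w₀ ⊔ ⟨v⟩) ⊓ x = w₀`.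
  rw [← hinf hvx]
  refine ⟨?_, hzx⟩
  have hv : v ∈ w₀ ⊔ span K {v} := mem_sup_right (mem_span_singleton_self v)
  have hvz : v + z ∈ w₀ ⊔ span K {v} := heq ▸ mem_sup_right (mem_span_singleton_self _)
  simpa using sub_mem hvz hv

theorem nontrivial_finrank_le_inf_diff {s : ℕ} (hxx' : x < x') (ht : 0 < t)
    (htx : t ≤ finrank K x) (hts : t ≤ s) (hs : finrank K x' + (s - t) ≤ finrank K V) :
    ({y : Submodule K V | finrank K y = s ∧ t ≤ finrank K ↥(y ⊓ x')} \
      {y | finrank K y = s ∧ t ≤ finrank K ↥(y ⊓ x)}).Nontrivial := by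
  obtain ⟨u, hu⟩ := Submodule.exists_isCompl x'
  obtain ⟨c, hcu, hc⟩ := u.exists_le_finrank_eq (k := s - t) <| by
    have := finrank_add_eq_of_isCompl hu
    omega
  have hcx' : Disjoint c x' := (hu.disjoint.mono_right hcu).symm
  have hmono := (nontrivial_finrank_eq_finrank_inf_lt hxx' ht htx).image_of_injOn
    (f := (· ⊔ c)) fun w₁ hw₁ w₂ hw₂ heq => by
      simpa [sup_inf_eq_left_of_disjoint hw₁.1 hcx', sup_inf_eq_left_of_disjoint hw₂.1 hcx']
        using congrArg (· ⊓ x') heq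
  refine hmono.mono ?_
  rintro _ ⟨w, ⟨hwx', hw, hwx⟩, rfl⟩
  have hy : (w ⊔ c) ⊓ x' = w := sup_inf_eq_left_of_disjoint hwx' hcx'
  have hyx : (w ⊔ c) ⊓ x = w ⊓ x :=
    calc (w ⊔ c) ⊓ x = (w ⊔ c) ⊓ x' ⊓ x := by rw [inf_assoc, inf_eq_right.mpr hxx'.le]
      _ = w ⊓ x := by rw [hy]
  refine ⟨⟨?_, by rw [hy, hw]⟩, fun ⟨_, h⟩ => ?_⟩
  · rw [finrank_sup_of_disjoint (hcx'.symm.mono_left hwx'), hw, hc]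
    omega
  · rw [hyx] at h
    omega

end

theorem stmt11_general (n t r r' s : ℕ)
    (K : Type*) [Field K] [Fintype K]
    (V : Type*) [AddCommGroup V] [Module K V] [FiniteDimensional K V]
    (hn : Module.finrank K V = n)
    (ht : 0 < t) (htr : t ≤ r) (hts : t ≤ s) (hrr' : r < r')
    (hr's : r' + s - t < n)
    (x x' : Submodule K V) (hxx' : x ≤ x')
    (hx : Module.finrank K x = r) (hx' : Module.finrank K x' = r') :
    Nat.card {y : Submodule K V // Module.finrank K y = s ∧
          t ≤ Module.finrank K ↥(y ⊓ x)} + 2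
      ≤ Nat.card {y : Submodule K V // Module.finrank K y = s ∧
          t ≤ Module.finrank K ↥(y ⊓ x')} := by
  have : Finite V := Module.finite_of_finite K
  have hlt : x < x' := lt_of_le_of_ne hxx' <| by
    rintro rfl
    omega
  refine Set.ncard_add_two_le_of_nontrivial_diff (fun y hy => ⟨hy.1, ?_⟩) (Set.toFinite _)
    (nontrivial_finrank_le_inf_diff hlt ht (by omega) hts (by omega))
  exact hy.2.trans (finrank_mono (inf_le_inf_left y hxx'))

theorem stmt11 (q n t r r' s : ℕ)
    (K : Type*) [Field K] [Fintype K] (hK : Fintype.card K = q)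
    (V : Type*) [AddCommGroup V] [Module K V] [FiniteDimensional K V]
    (hn : Module.finrank K V = n)
    (ht : 0 < t) (htr : t ≤ r) (hts : t ≤ s) (hrr' : r < r')
    (hr's : r' + s - t < n)
    (x x' : Submodule K V) (hxx' : x ≤ x')
    (hx : Module.finrank K x = r) (hx' : Module.finrank K x' = r') :
    Nat.card {y : Submodule K V // Module.finrank K y = s ∧
          t ≤ Module.finrank K ↥(y ⊓ x)} + 2
      ≤ Nat.card {y : Submodule K V // Module.finrank K y = s ∧
          t ≤ Module.finrank K ↥(y ⊓ x')} :=
  stmt11_general n t r r' s K V hn ht htr hts hrr' hr's x x' hxx' hx hx'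
end

section
/- Let n = 2r ≥ 4, s and t positive integers with t ≤ min{r,s}, r + s − t < n, and x an r-subset of [n] with complement x̄. In the bipartite graph on C([n],r) ∪ C([n],s) where an r-set and an s-set are adjacent iff their intersection has size < t, the pair {x, x̄} is contained in a maximum-sized nontrivial independent set (as its trace on the r-sets side) if and only if s = r and t = 1. -/
/-!
Call an `s`-set `b` one-sided if `t ≤ |x ∩ b|` but `|x̄ ∩ b| < t`. If `{x, x̄}` is the trace of a
maximum nontrivial independent set `(A, B)`, then every `b ∈ B` meets both `x` and `x̄` in at least
`t` points (so `2t ≤ s`), and comparing `(A, B)` with the independent set formed by `x` and all its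
non-neighbours shows that at most one `s`-set is one-sided. But the `s`-sets meeting `x` in
`s - t + 1` points and `x̄` in `t - 1` points are one-sided, and there are
`C(r, s - t + 1) * C(r, t - 1) ≥ 2` of them unless `s = r` and `t = 1`.

Conversely, for `s = r` and `t = 1` every `r`-set is adjacent to its complement, so complementation
maps `B'` injectively into the complement of `A'` for any independent `(A', B')`; hence
`|A'| + |B'| ≤ C(n, r)`, with equality for `A = {x, x̄}` and `B` all other `r`-sets.
-/

open Finset

theorem Nat.one_lt_choose {n k : ℕ} (hk0 : 0 < k) (hkn : k < n) : 1 < n.choose k := by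
  have hpos := Nat.choose_pos hkn.le
  have hne : n.choose k ≠ 1 := Nat.choose_eq_one_iff.not.mpr (by omega)
  omega

namespace Finset

variable {α : Type*} [Fintype α] [DecidableEq α]

theorem inter_union_of_subset_of_subset_compl {x u v : Finset α} (hu : u ⊆ x) (hv : v ⊆ xᶜ) :
    x ∩ (u ∪ v) = u ∧ xᶜ ∩ (u ∪ v) = v := by
  have hxv : Disjoint x v := subset_compl_iff_disjoint_left.mp hv
  have hxu : Disjoint xᶜ u := subset_compl_iff_disjoint_left.mp (by rwa [compl_compl])
  rw [inter_union_distrib_left, inter_union_distrib_left, inter_eq_right.mpr hu,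
    inter_eq_right.mpr hv, disjoint_iff_inter_eq_empty.mp hxv,
    disjoint_iff_inter_eq_empty.mp hxu, union_empty, empty_union]
  exact ⟨rfl, rfl⟩

theorem card_inter_add_card_compl_inter (x b : Finset α) : #(x ∩ b) + #(xᶜ ∩ b) = #b := by
  rw [inter_comm, inter_comm xᶜ, ← sdiff_eq_inter_compl, card_inter_add_card_sdiff]

theorem card_filter_card_inter_eq_and_card_compl_inter_eq (x : Finset α) (k j : ℕ) :
    #{b : Finset α | #(x ∩ b) = k ∧ #(xᶜ ∩ b) = j} = (#x).choose k * (#xᶜ).choose j := by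
  rw [← card_powersetCard, ← card_powersetCard, ← card_product]
  refine card_nbij' (fun b => (x ∩ b, xᶜ ∩ b)) (fun p => p.1 ∪ p.2) ?_ ?_ ?_ ?_
  · intro b hb
    simp only [coe_filter, mem_univ, true_and, Set.mem_ofPred_eq] at hb
    simp [mem_powersetCard, hb]
  · rintro ⟨u, v⟩ huv
    simp only [coe_product, Set.mem_prod, mem_coe, mem_powersetCard] at huv
    obtain ⟨⟨hux, hu⟩, hvx, hv⟩ := huv
    obtain ⟨hxu, hxv⟩ := inter_union_of_subset_of_subset_compl hux hvx
    simp [hxu, hxv, hu, hv]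
  · intro b _
    change x ∩ b ∪ xᶜ ∩ b = b
    rw [← union_inter_distrib_right, union_compl, univ_inter]
  · rintro ⟨u, v⟩ huv
    simp only [coe_product, Set.mem_prod, mem_coe, mem_powersetCard] at huv
    obtain ⟨⟨hux, -⟩, hvx, -⟩ := huv
    obtain ⟨hxu, hxv⟩ := inter_union_of_subset_of_subset_compl hux hvx
    simp [hxu, hxv]

theorem eq_compl_of_disjoint_of_card_le {x b : Finset α} (h : Disjoint x b) (hb : #xᶜ ≤ #b) :
    b = xᶜ :=
  eq_of_subset_of_card_le (subset_compl_iff_disjoint_left.mpr h) hb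

end Finset

section BipartiteGraph

variable {X Y : Type*} {E : X → Y → Prop}

theorem ncard_add_ncard_le_of_injective_adj [Finite X] (c : Y → X) (hc : Function.Injective c)
    (hE : ∀ b, E (c b) b) {A : Set X} {B : Set Y} (hAB : ∀ a ∈ A, ∀ b ∈ B, ¬E a b) :
    A.ncard + B.ncard ≤ Nat.card X := by
  have hdisj : Disjoint A (c '' B) := by
    rw [Set.disjoint_right]
    rintro _ ⟨b, hb, rfl⟩ ha
    exact hAB _ ha b hb (hE b)
  calc A.ncard + B.ncard = A.ncard + (c '' B).ncard := by rw [Set.ncard_image_of_injective _ hc]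
    _ = (A ∪ c '' B).ncard := (Set.ncard_union_eq hdisj).symm
    _ ≤ Nat.card X := Set.ncard_le_card _

theorem FragX.nonempty_setOf_not_adj_and_not_adj {a a' : X} (h : FragX E {a, a'}) :
    {b | ¬E a b ∧ ¬E a' b}.Nonempty := by
  obtain ⟨B, ⟨-, hB, hind⟩, -⟩ := h
  obtain ⟨b, hb⟩ := hB
  exact ⟨b, hind a (by simp) b hb, hind a' (by simp) b hb⟩

theorem FragX.ncard_setOf_not_adj_and_adj_le_one [Finite Y] {a a' : X} (h : FragX E {a, a'}) :
    {b | ¬E a b ∧ E a' b}.ncard ≤ 1 := by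
  obtain ⟨B, ⟨-, hB, hind⟩, hmax⟩ := h
  have hBsub : B ⊆ {b | ¬E a b ∧ ¬E a' b} := fun b hb =>
    ⟨hind a (by simp) b hb, hind a' (by simp) b hb⟩
  have hsplit := Set.ncard_inter_add_ncard_sdiff_eq_ncard {b | ¬E a b} {b | E a' b}
  have hle := hmax {a} {b | ¬E a b}
    ⟨Set.singleton_nonempty a, (hB.mono hBsub).mono fun _ hb => hb.1, by simp⟩
  have hpair : ({a, a'} : Set X).ncard ≤ 1 + 1 :=
    Set.ncard_singleton a' ▸ Set.ncard_insert_le a {a'}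
  have hB := Set.ncard_le_ncard hBsub
  change ({b | ¬E a b ∧ E a' b}.ncard + {b | ¬E a b ∧ ¬E a' b}.ncard = _) at hsplit
  rw [Set.ncard_singleton] at hle
  omega

end BipartiteGraph

theorem fragX_of_nontrivIndep_compl {X : Type*} {E : X → X → Prop} [Finite X] (c : X → X)
    (hc : Function.Injective c) (hE : ∀ b, E (c b) b) {A : Set X} (hA : NontrivIndep E A Aᶜ) :
    FragX E A :=
  ⟨Aᶜ, hA, fun _ _ h' => (Set.ncard_add_ncard_compl A).symm ▸
    ncard_add_ncard_le_of_injective_adj c hc hE h'.2.2⟩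

section SubsetIntersection

variable {α : Type*} [Fintype α] [DecidableEq α]

theorem one_lt_ncard_setOf_le_card_inter_and_card_compl_inter_lt {r s t : ℕ} {x : Finset α}
    (hx : #x = r) (hxc : #xᶜ = r) (ht : 0 < t) (hts : 2 * t ≤ s) (hsr : s < r + t)
    (hne : ¬(s = r ∧ t = 1)) :
    1 < {b : {b : Finset α // #b = s} | t ≤ #(x ∩ b) ∧ #(xᶜ ∩ b) < t}.ncard := by
  have hchoose : 1 < r.choose (s - t + 1) * r.choose (t - 1) := by
    rcases (show t = 1 ∨ 2 ≤ t by omega) with rfl | ht2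
    · rw [show s - 1 + 1 = s by omega]
      simpa using Nat.one_lt_choose (n := r) (k := s) (by omega) (by omega)
    · calc 1 < r.choose (t - 1) := Nat.one_lt_choose (by omega) (by omega)
        _ ≤ _ := Nat.le_mul_of_pos_left _ (Nat.choose_pos (by omega))
  have hcount := card_filter_card_inter_eq_and_card_compl_inter_eq x (s - t + 1) (t - 1)
  rw [hx, hxc] at hcount
  rw [← hcount] at hchoose
  obtain ⟨b₁, hb₁, b₂, hb₂, hb⟩ := one_lt_card.mp hchoose
  simp only [mem_filter, mem_univ, true_and] at hb₁ hb₂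
  have hcard : ∀ b : Finset α, #(x ∩ b) = s - t + 1 → #(xᶜ ∩ b) = t - 1 → #b = s :=
    fun b h₁ h₂ => by rw [← card_inter_add_card_compl_inter x b]; omega
  rw [Set.one_lt_ncard_iff]
  refine ⟨⟨b₁, hcard b₁ hb₁.1 hb₁.2⟩, ⟨b₂, hcard b₂ hb₂.1 hb₂.2⟩, ?_, ?_,
    fun h => hb (congrArg Subtype.val h)⟩ <;> simp only [Set.mem_ofPred_eq] <;> omega

theorem fragX_pair_compl_card_inter_lt_one {r : ℕ} (hr : 2 ≤ r) {x : Finset α} (hx : #x = r)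
    (hxc : #xᶜ = r) :
    FragX (X := {a : Finset α // #a = r}) (Y := {b : Finset α // #b = r})
      (fun a b => #((a : Finset α) ∩ b) < 1) {⟨x, hx⟩, ⟨xᶜ, hxc⟩} := by
  have hα : Fintype.card α = 2 * r := by rw [← card_add_card_compl x]; omega
  have hcompl (b : Finset α) (hb : #b = r) : #bᶜ = r := by rw [card_compl, hb, hα]; omega
  have hdisj (a b : Finset α) : #(a ∩ b) < 1 ↔ Disjoint a b := by
    simp [disjoint_iff_inter_eq_empty]
  refine fragX_of_nontrivIndep_compl (fun b => ⟨bᶜ, hcompl b b.2⟩)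
    (fun a b h => Subtype.ext (compl_injective (congrArg Subtype.val h)))
    (fun b => (hdisj _ _).mpr disjoint_compl_left) ⟨Set.insert_nonempty _ _, ?_, ?_⟩
  · set A : Set {a : Finset α // #a = r} := {⟨x, hx⟩, ⟨xᶜ, hxc⟩}
    have hsum := Set.ncard_add_ncard_compl A
    have hA : A.ncard ≤ 1 + 1 := (Set.ncard_insert_le _ _).trans (by rw [Set.ncard_singleton])
    have hmid : 2 * r ≤ (2 * r).choose r := by simpa using Nat.choose_le_middle 1 (2 * r)
    rw [Nat.card_eq_fintype_card, Fintype.card_finset_len, hα] at hsum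
    exact Set.nonempty_of_ncard_ne_zero (by omega)
  · rintro a ha b hb hab
    simp only [Set.mem_compl_iff, Set.mem_insert_iff, Set.mem_singleton_iff] at hb
    rcases ha with rfl | rfl
    · exact hb (Or.inr (Subtype.ext
        (eq_compl_of_disjoint_of_card_le ((hdisj _ _).mp hab) (by rw [hxc, b.2]))))
    · have hbx :=
        eq_compl_of_disjoint_of_card_le ((hdisj _ _).mp hab) (by rw [compl_compl, hx, b.2])
      rw [compl_compl] at hbx
      exact hb (Or.inl (Subtype.ext hbx))

end SubsetIntersection

theorem stmt15_general (n r s t : ℕ) (hn : n = 2 * r) (hn4 : 4 ≤ n)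
    (ht : 0 < t) (hrst : r + s - t < n)
    (x : Finset (Fin n)) (hx : x.card = r) (hxc : xᶜ.card = r) :
    FragX (X := {a : Finset (Fin n) // a.card = r})
        (Y := {b : Finset (Fin n) // b.card = s})
        (fun a b => ((a : Finset (Fin n)) ∩ (b : Finset (Fin n))).card < t)
        ({⟨x, hx⟩, ⟨xᶜ, hxc⟩} : Set {a : Finset (Fin n) // a.card = r})
      ↔ (s = r ∧ t = 1) := by
  constructor
  · intro h
    by_contra hne
    have h2ts : 2 * t ≤ s := by
      obtain ⟨b, hb₁, hb₂⟩ := h.nonempty_setOf_not_adj_and_not_adj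
      have hsplit := card_inter_add_card_compl_inter x b
      have hbs := b.2
      simp only [not_lt] at hb₁ hb₂
      omega
    have hle := h.ncard_setOf_not_adj_and_adj_le_one
    simp only [not_lt] at hle
    have hlt := one_lt_ncard_setOf_le_card_inter_and_card_compl_inter_lt hx hxc ht h2ts
      (by omega) hne
    omega
  · rintro ⟨rfl, rfl⟩
    exact fragX_pair_compl_card_inter_lt_one (by omega) hx hxc

theorem stmt15 (n r s t : ℕ) (hn : n = 2 * r) (hn4 : 4 ≤ n)
    (ht : 0 < t) (htr : t ≤ r) (hts : t ≤ s) (hrst : r + s - t < n)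
    (x : Finset (Fin n)) (hx : x.card = r) (hxc : xᶜ.card = r) :
    FragX (X := {a : Finset (Fin n) // a.card = r})
        (Y := {b : Finset (Fin n) // b.card = s})
        (fun a b => ((a : Finset (Fin n)) ∩ (b : Finset (Fin n))).card < t)
        ({⟨x, hx⟩, ⟨xᶜ, hxc⟩} : Set {a : Finset (Fin n) // a.card = r})
      ↔ (s = r ∧ t = 1) :=
  stmt15_general n r s t hn hn4 ht hrst x hx hxc
end

section
/- Let n, r, s, t be positive integers with n ≥ max{2^(s+1)(s−t), s² } + 2r + 1, t ≤ r < s (so in particular s > t). Then C(r,t)·C(n−r, s−t) > Σ_{j=t}^{r} C(s,j)·C(n−s, r−j) (in fact this inequality holds whenever n ≥ 2^(s+1)(s−t) + 2r + 1 and s > r ≥ t). -/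
/-!
Every summand satisfies `C(n-s, r-j) ≤ C(n-s, r-t)` (binomials increase up to the middle), and
`∑ⱼ C(s,j) ≤ 2^s`, so the left side is at most `2^s · C(n-s, r-t)`. Since `n` is large compared with
`2^s (s-t)`, the ratio `C(n-s, r-t+1) / C(n-s, r-t) = (n-s-r+t)/(r-t+1)` exceeds `2^s`; and
`C(n-s, r-t+1) ≤ C(n-s, s-t) ≤ C(n-r, s-t) ≤ C(r,t) · C(n-r, s-t)`.
-/

open Finset

namespace Nat

theorem choose_le_choose_right_of_le_half {N k m : ℕ} (hkm : k ≤ m) (hm : 2 * m ≤ N) :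
    N.choose k ≤ N.choose m := by
  induction m, hkm using Nat.le_induction with
  | base => exact le_rfl
  | succ m _ ih => exact (ih (by omega)).trans (choose_le_succ_of_lt_half_left (by omega))

theorem sum_choose_mul_choose_le {N r s t : ℕ} (h : 2 * (r - t) ≤ N) :
    ∑ j ∈ Icc t r, s.choose j * N.choose (r - j) ≤ 2 ^ s * N.choose (r - t) := by
  calc ∑ j ∈ Icc t r, s.choose j * N.choose (r - j)
      ≤ ∑ j ∈ Icc t r, s.choose j * N.choose (r - t) := by
        refine sum_le_sum fun j hj => Nat.mul_le_mul_left _ ?_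
        exact choose_le_choose_right_of_le_half (by have := (mem_Icc.mp hj).1; omega) h
    _ = (∑ j ∈ Icc t r, s.choose j) * N.choose (r - t) := (sum_mul ..).symm
    _ ≤ (∑ j ∈ range (s + 1), s.choose j) * N.choose (r - t) := by
        refine Nat.mul_le_mul_right _ (sum_le_sum_of_ne_zero fun j _ hj => ?_)
        exact mem_range.mpr (Nat.lt_succ_of_le (not_lt.mp (mt choose_eq_zero_of_lt hj)))
    _ = 2 ^ s * N.choose (r - t) := by rw [sum_range_choose]

theorem mul_choose_lt_choose_succ {N k a : ℕ} (h : a * (k + 1) < N - k) :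
    a * N.choose k < N.choose (k + 1) := by
  have hpos : 0 < N.choose k := choose_pos (by omega)
  refine Nat.lt_of_mul_lt_mul_right (a := k + 1) ?_
  calc a * N.choose k * (k + 1) = N.choose k * (a * (k + 1)) := by ring
    _ < N.choose k * (N - k) := Nat.mul_lt_mul_of_pos_left h hpos
    _ = N.choose (k + 1) * (k + 1) := (choose_succ_right_eq N k).symm

end Nat

theorem stmt17_general (n r s t : ℕ) (htr : t ≤ r) (hrs : r < s)
    (hn : max (2 ^ (s + 1) * (s - t)) (s ^ 2) + 2 * r + 1 ≤ n) :
    ∑ j ∈ Finset.Icc t r, s.choose j * (n - s).choose (r - j)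
      < r.choose t * (n - r).choose (s - t) := by
  have hst : 2 * (s - t) ≤ 2 ^ s * (s - t) :=
    Nat.mul_le_mul_right _ (Nat.one_lt_two_pow (by omega))
  have hn' : 2 * (2 ^ s * (s - t)) + 2 * r + 1 ≤ n := by
    rw [pow_succ', mul_assoc] at hn; omega
  have hgap : 2 ^ s * (r - t + 1) < n - s - (r - t) :=
    (Nat.mul_le_mul_left _ (by omega : r - t + 1 ≤ s - t)).trans_lt (by omega)
  calc _ ≤ 2 ^ s * (n - s).choose (r - t) := Nat.sum_choose_mul_choose_le (by omega)
    _ < (n - s).choose (r - t + 1) := Nat.mul_choose_lt_choose_succ hgap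
    _ ≤ (n - s).choose (s - t) := Nat.choose_le_choose_right_of_le_half (by omega) (by omega)
    _ ≤ (n - r).choose (s - t) := Nat.choose_le_choose _ (by omega)
    _ ≤ r.choose t * (n - r).choose (s - t) := Nat.le_mul_of_pos_left _ (Nat.choose_pos htr)

theorem stmt17 (n r s t : ℕ) (ht : 0 < t) (htr : t ≤ r) (hrs : r < s)
    (hn : max (2 ^ (s + 1) * (s - t)) (s ^ 2) + 2 * r + 1 ≤ n) :
    ∑ j ∈ Finset.Icc t r, s.choose j * (n - s).choose (r - j)
      < r.choose t * (n - r).choose (s - t) :=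
  stmt17_general n r s t htr hrs hn
end

section
/- Let q ≥ 2 be a prime power and n, r, s, t positive integers with t ≤ r < s and s² + r² + sr ≤ n. Then q^((r−t)(s−t)) · [r choose t]_q · [n−r choose s−t]_q > Σ_{j=t}^{r} q^((s−j)(r−j)) · [s choose j]_q · [n−s choose r−j]_q. -/
open Finset

theorem pow_le_gaussBinom (q : ℕ) :
    ∀ {m k : ℕ}, k ≤ m → q ^ (k * (m - k)) ≤ gaussBinom q m k
  | _, 0, _ => by simp [gaussBinom]
  | m + 1, k + 1, hk => by
    show _ ≤ gaussBinom q m k + q ^ (k + 1) * gaussBinom q m (k + 1)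
    rcases (Nat.le_of_succ_le_succ hk).lt_or_eq with hkm | rfl
    · have hexp : (k + 1) * (m + 1 - (k + 1)) = (k + 1) + (k + 1) * (m - (k + 1)) := by
        rw [Nat.add_sub_add_right, show m - k = m - (k + 1) + 1 by omega]; ring
      calc q ^ ((k + 1) * (m + 1 - (k + 1)))
          = q ^ (k + 1) * q ^ ((k + 1) * (m - (k + 1))) := by rw [hexp, pow_add]
        _ ≤ q ^ (k + 1) * gaussBinom q m (k + 1) :=
          Nat.mul_le_mul_left _ (pow_le_gaussBinom q hkm)
        _ ≤ _ := Nat.le_add_left _ _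
    · simpa using (pow_le_gaussBinom q le_rfl).trans (Nat.le_add_right (gaussBinom q k k) _)

theorem gaussBinom_mul_prod (q : ℕ) (hq : 1 ≤ q) : ∀ m k,
    gaussBinom q m k * ∏ i ∈ range k, (q ^ (i + 1) - 1) = ∏ i ∈ range k, (q ^ (m - i) - 1)
  | _, 0 => by simp [gaussBinom]
  | 0, k + 1 => by simp [gaussBinom, prod_range_succ']
  | m + 1, k + 1 => by
    show (gaussBinom q m k + q ^ (k + 1) * gaussBinom q m (k + 1)) * _ = _
    rw [prod_range_succ' (fun i => q ^ (m + 1 - i) - 1), add_mul, mul_assoc,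
      gaussBinom_mul_prod q hq m (k + 1), prod_range_succ, ← mul_assoc,
      gaussBinom_mul_prod q hq m k, prod_range_succ, mul_left_comm, ← mul_add]
    simp only [Nat.add_sub_add_right, Nat.sub_zero]
    rcases Nat.lt_or_ge m k with hmk | hkm
    · rw [prod_eq_zero (mem_range.2 hmk) (by simp), zero_mul, zero_mul]
    · congr 1
      have hmul : q ^ (k + 1) * q ^ (m - k) = q ^ (m + 1) := by
        rw [← pow_add]; congr 1; omega
      have h₁ : 1 ≤ q ^ (k + 1) := Nat.one_le_pow _ _ hq
      have h₂ : q ^ (k + 1) ≤ q ^ (m + 1) := Nat.pow_le_pow_right hq (by omega)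
      rw [Nat.mul_sub, mul_one, hmul]
      omega

theorem gaussBinom_le_pow (q : ℕ) (hq : 2 ≤ q) {m k : ℕ} (hk : k ≤ m) :
    gaussBinom q m k ≤ q ^ (k * (m - k) + k) := by
  have hden : ∏ i ∈ range k, q ^ i ≤ ∏ i ∈ range k, (q ^ (i + 1) - 1) := by
    refine prod_le_prod' fun i _ => ?_
    have h₁ := Nat.one_le_pow i q (by omega)
    have h₂ : q ^ i * 2 ≤ q ^ i * q := Nat.mul_le_mul_left _ hq
    rw [pow_succ]; omega
  have hnum : ∏ i ∈ range k, (q ^ (m - i) - 1) ≤ ∏ i ∈ range k, q ^ (m - i) :=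
    prod_le_prod' fun i _ => Nat.sub_le _ _
  have hreflect :
      ∏ i ∈ range k, q ^ (m - i) = q ^ (k * (m - k) + k) * ∏ i ∈ range k, q ^ i := by
    rw [← prod_range_reflect (fun i => q ^ (m - i)),
      prod_congr rfl fun i hi => show q ^ (m - (k - 1 - i)) = q ^ (m - k + 1) * q ^ i by
        rw [← pow_add]; congr 1; have := mem_range.1 hi; omega,
      prod_mul_distrib, prod_const, card_range, ← pow_mul]
    ring
  refine Nat.le_of_mul_le_mul_right ?_ (by positivity : 0 < ∏ i ∈ range k, q ^ i)
  calc gaussBinom q m k * ∏ i ∈ range k, q ^ i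
      ≤ gaussBinom q m k * ∏ i ∈ range k, (q ^ (i + 1) - 1) := Nat.mul_le_mul_left _ hden
    _ = ∏ i ∈ range k, (q ^ (m - i) - 1) := gaussBinom_mul_prod q (by omega) m k
    _ ≤ _ := hreflect ▸ hnum

theorem sum_lt_of_mul_le {ι : Type*} {s : Finset ι} {f : ι → ℕ} {c M : ℕ} (hc : #s < c)
    (hM : 0 < M) (h : ∀ i ∈ s, f i * c ≤ M) : ∑ i ∈ s, f i < M := by
  refine Nat.lt_of_mul_lt_mul_right (a := c) ?_
  calc (∑ i ∈ s, f i) * c = ∑ i ∈ s, f i * c := sum_mul _ _ _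
    _ ≤ #s * M := by simpa using sum_le_sum h
    _ < M * c := by rw [mul_comm M]; exact Nat.mul_lt_mul_of_pos_right hc hM

theorem summand_exponent_le {n r s t j : ℕ} (htj : t ≤ j) (hjr : j ≤ r) (hrs : r < s)
    (hn : 3 * r + s < n) :
    (s - j) * (r - j) + (j * (s - j) + j) + ((r - j) * (n - s - (r - j)) + (r - j)) + (r + 1)
      ≤ (r - t) * (s - t) + t * (r - t) + (s - t) * (n - r - (s - t)) := by
  have h₁ : r - j ≤ n - s := by omega
  have h₂ : s - t ≤ n - r := by omega
  have h₃ : j ≤ s := by omega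
  have h₄ : s ≤ n := by omega
  zify [htj, hjr, htj.trans hjr, h₁, h₂, h₃, h₃.trans' htj, h₄, h₄.trans' hrs.le]
  have hgap : ((r - t) * (s - t) + t * (r - t) + (s - t) * (n - r - (s - t)) : ℤ)
      - ((s - j) * (r - j) + (j * (s - j) + j) + ((r - j) * (n - s - (r - j)) + (r - j)) + (r + 1))
      = (n - r - s) * (s - r + j - t) + (j ^ 2 - t ^ 2) - 2 * r - 1 := by ring
  have hN : (2 * r + 1 : ℤ) ≤ n - r - s := by omega
  have hcoeff : (1 : ℤ) ≤ s - r + j - t := by omega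
  have hsq : (t : ℤ) ^ 2 ≤ j ^ 2 := by gcongr
  nlinarith

theorem summand_mul_pow_succ_le {q n r s t j : ℕ} (hq : 2 ≤ q) (htj : t ≤ j) (hjr : j ≤ r)
    (hrs : r < s) (hn : 3 * r + s < n) :
    q ^ ((s - j) * (r - j)) * gaussBinom q s j * gaussBinom q (n - s) (r - j) * q ^ (r + 1)
      ≤ q ^ ((r - t) * (s - t) + t * (r - t) + (s - t) * (n - r - (s - t))) :=
  calc _ ≤ q ^ ((s - j) * (r - j)) * q ^ (j * (s - j) + j)
          * q ^ ((r - j) * (n - s - (r - j)) + (r - j)) * q ^ (r + 1) := by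
        gcongr
        exacts [gaussBinom_le_pow q hq (by omega), gaussBinom_le_pow q hq (by omega)]
    _ ≤ _ := by
        simp only [← pow_add]
        exact Nat.pow_le_pow_right (by omega) (summand_exponent_le htj hjr hrs hn)

theorem stmt18_general (q n r s t : ℕ) (hq2 : 2 ≤ q)
    (ht : 0 < t) (htr : t ≤ r) (hrs : r < s)
    (hn : s ^ 2 + r ^ 2 + s * r ≤ n) :
    ∑ j ∈ Finset.Icc t r,
        q ^ ((s - j) * (r - j)) * gaussBinom q s j * gaussBinom q (n - s) (r - j)
      < q ^ ((r - t) * (s - t)) * gaussBinom q r t * gaussBinom q (n - r) (s - t) := by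
  have hn' : 3 * r + s < n := by nlinarith
  have hcard : #(Icc t r) < q ^ (r + 1) := by
    rw [Nat.card_Icc]
    exact (Nat.sub_le _ _).trans_lt (Nat.lt_pow_self (by omega))
  calc _ < q ^ ((r - t) * (s - t) + t * (r - t) + (s - t) * (n - r - (s - t))) :=
        sum_lt_of_mul_le hcard (by positivity) fun j hj =>
          summand_mul_pow_succ_le hq2 (mem_Icc.1 hj).1 (mem_Icc.1 hj).2 hrs hn'
    _ ≤ _ := by
        rw [pow_add, pow_add]
        gcongr
        exacts [pow_le_gaussBinom q htr, pow_le_gaussBinom q (by omega)]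

theorem stmt18 (q n r s t : ℕ) (hq : IsPrimePow q) (hq2 : 2 ≤ q)
    (ht : 0 < t) (htr : t ≤ r) (hrs : r < s)
    (hn : s ^ 2 + r ^ 2 + s * r ≤ n) :
    ∑ j ∈ Finset.Icc t r,
        q ^ ((s - j) * (r - j)) * gaussBinom q s j * gaussBinom q (n - s) (r - j)
      < q ^ ((r - t) * (s - t)) * gaussBinom q r t * gaussBinom q (n - r) (s - t) :=
  stmt18_general q n r s t hq2 ht htr hrs hn
end
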